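/- Fix γ > 0 and σ₀ > 0. For σ > 0, let λ_σ(x) = g_σ(x)/g_{σ₀}(x) be the ratio of generalized Pareto densities with common index γ. Then there exists a constant C and functions η(σ), ψ(σ) with η(σ₀) = ψ(σ₀) = 0 such that |log λ_σ(x) - η(σ)·T(x) + ψ(σ)| ≤ C(σ - σ₀)² uniformly in x ≥ 0, for all σ in a neighborhood of σ₀, where T(x) = x/(σ₀/γ + x). -/

import Mathlib

open Real

/-- If `|w| < 1/2` then `|log (1+w) - w| ≤ 2 * w ^ 2`. -/
lemma log_one_add_sub_self_abs_le {w : ℝ} (hw : |w| < 1/2) :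
    |Real.log (1 + w) - w| ≤ 2 * w ^ 2 := by
  have h1 : |(-w)| < 1 := by rw [abs_neg]; linarith
  have key := Real.abs_log_sub_add_sum_range_le h1 1
  have h5 : |Real.log (1 + w) - w| = |(∑ i ∈ Finset.range 1, (-w) ^ (i+1) / (i+1)) + Real.log (1 - -w)| := by
    simp [Finset.sum_range_one, sub_neg_eq_add]
    congr 1
    ring
  rw [h5]
  refine key.trans ?_
  rw [abs_neg]
  have hwn : (0:ℝ) ≤ |w| := abs_nonneg w
  have h2 : (1:ℝ)/2 ≤ 1 - |w| := by linarith
  rw [div_le_iff₀ (by linarith)]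
  have h3 : |w| ^ (1+1) = w ^ 2 := by rw [show (1+1:ℕ) = 2 from rfl, sq_abs]
  rw [h3]
  nlinarith [sq_nonneg w]

/-- Uniform-in-x second-order Taylor bound: the log density ratio of generalized
Pareto densities with common index γ is, up to `O((σ-σ₀)²)` uniformly in `x ≥ 0`,
a linear tilt `η(σ)·T(x) - ψ(σ)` with `T(x) = x/(σ₀/γ + x)`. -/
theorem gpd_tilt_approx (γ σ₀ : ℝ) (hγ : 0 < γ) (hσ₀ : 0 < σ₀) :
    ∃ (C : ℝ) (η ψ : ℝ → ℝ) (δ : ℝ), 0 < δ ∧ η σ₀ = 0 ∧ ψ σ₀ = 0 ∧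
      ∀ σ : ℝ, |σ - σ₀| < δ → 0 < σ → ∀ x : ℝ, 0 ≤ x →
        |Real.log ((1 / σ * (1 + γ * x / σ) ^ (-1 / γ - 1)) /
              (1 / σ₀ * (1 + γ * x / σ₀) ^ (-1 / γ - 1)))
            - η σ * (x / (σ₀ / γ + x)) + ψ σ| ≤ C * (σ - σ₀) ^ 2 := by
  set c : ℝ := -1 / γ - 1 with hc
  refine ⟨2 * |c| / σ₀ ^ 2, fun σ => -c * (σ - σ₀) / σ₀,
    fun σ => (1 + c) * (Real.log σ - Real.log σ₀) - c * ((σ - σ₀) / σ₀),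
    σ₀ / 2, by positivity, by simp, by simp, ?_⟩
  intro σ hδ hσ x hx
  have hγx : 0 ≤ γ * x := by positivity
  have hσγx : 0 < σ + γ * x := by linarith
  have hσ₀γx : 0 < σ₀ + γ * x := by linarith
  have hT : 0 < σ₀ / γ + x := by positivity
  have hA : (0:ℝ) < 1 + γ * x / σ := by positivity
  have hB : (0:ℝ) < 1 + γ * x / σ₀ := by positivity
  set w : ℝ := (σ - σ₀) / (σ₀ + γ * x) with hwdef
  have hwbound : |w| ≤ |σ - σ₀| / σ₀ := by
    rw [hwdef, abs_div, abs_of_pos hσ₀γx]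
    gcongr
    linarith
  have hwhalf : |w| < 1/2 := by
    refine hwbound.trans_lt ?_
    rw [div_lt_iff₀ hσ₀]
    linarith
  have hlog : Real.log ((1 / σ * (1 + γ * x / σ) ^ (-1 / γ - 1)) /
        (1 / σ₀ * (1 + γ * x / σ₀) ^ (-1 / γ - 1)))
      = (1 + c) * (Real.log σ₀ - Real.log σ) + c * Real.log (1 + w) := by
    have hAe : (1 : ℝ) + γ * x / σ = (σ + γ * x) / σ := by field_simp
    have hBe : (1 : ℝ) + γ * x / σ₀ = (σ₀ + γ * x) / σ₀ := by field_simp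
    have hwe : (1 : ℝ) + w = (σ + γ * x) / (σ₀ + γ * x) := by
      rw [hwdef]; field_simp; ring
    rw [Real.log_div (by positivity) (by positivity),
      Real.log_mul (by positivity) (by positivity),
      Real.log_mul (by positivity) (by positivity),
      Real.log_rpow hA, Real.log_rpow hB, hAe, hBe, hwe,
      Real.log_div hσγx.ne' hσ₀γx.ne', Real.log_div hσγx.ne' hσ.ne',
      Real.log_div hσ₀γx.ne' hσ₀.ne', one_div, one_div,
      Real.log_inv, Real.log_inv]
    ring
  have hTw : (σ - σ₀) / σ₀ * (x / (σ₀ / γ + x)) - (σ - σ₀) / σ₀ = -w := by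
    rw [hwdef]
    have h1 : σ₀ + γ * x = γ * (σ₀ / γ + x) := by field_simp
    rw [h1]
    field_simp
    ring
  have key : Real.log ((1 / σ * (1 + γ * x / σ) ^ (-1 / γ - 1)) /
        (1 / σ₀ * (1 + γ * x / σ₀) ^ (-1 / γ - 1)))
      - (-c * (σ - σ₀) / σ₀) * (x / (σ₀ / γ + x))
      + ((1 + c) * (Real.log σ - Real.log σ₀) - c * ((σ - σ₀) / σ₀))
      = c * (Real.log (1 + w) - w) := by
    rw [hlog]
    linear_combination c * hTw
  rw [key, abs_mul]
  have hlw := log_one_add_sub_self_abs_le hwhalf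
  have hw2 : w ^ 2 ≤ (σ - σ₀) ^ 2 / σ₀ ^ 2 := by
    calc w ^ 2 = |w| ^ 2 := (sq_abs w).symm
      _ ≤ (|σ - σ₀| / σ₀) ^ 2 := by gcongr
      _ = (σ - σ₀) ^ 2 / σ₀ ^ 2 := by rw [div_pow, sq_abs]
  calc |c| * |Real.log (1 + w) - w| ≤ |c| * (2 * w ^ 2) := by gcongr
    _ ≤ |c| * (2 * ((σ - σ₀) ^ 2 / σ₀ ^ 2)) := by gcongr
    _ = 2 * |c| / σ₀ ^ 2 * (σ - σ₀) ^ 2 := by field_simp
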